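/- Let σ be the unique field automorphism of F = ℚ(q, z_1,…,z_l) fixing ℚ with σ(q) = q^{−1} and σ(z_i) = z_i^{−1} for all i. Then for every m ∈ ℕ^l, σ(J_m) = q^{(1/2)∑_{i,j} B_{ij} m_i m_j} · z^m · J_m, where z^m = ∏_i z_i^{m_i}. -/

import Mathlib

/- STATEMENT 9: Let σ be the field automorphism of F = ℚ(q,z_1,…,z_l) with
   σ(q)=q⁻¹ and σ(z_i)=z_i⁻¹ (any ring automorphism automatically fixes ℚ).
   Then σ(J_m) = q^{(1/2)∑ B_{ij} m_i m_j} z^m J_m, where (J_m) is the unique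
   family with J_0 = 1 satisfying the fermionic recursion. -/

noncomputable section

open scoped BigOperators

/-- The field ℚ(q, z_1, …, z_l). -/
abbrev FF (l : ℕ) : Type := FractionRing (MvPolynomial (Fin (l + 1)) ℚ)

/-- the variable q -/
def qv (l : ℕ) : FF l :=
  algebraMap (MvPolynomial (Fin (l + 1)) ℚ) (FF l) (MvPolynomial.X 0)

/-- the variables z_i -/
def zv (l : ℕ) (i : Fin l) : FF l :=
  algebraMap (MvPolynomial (Fin (l + 1)) ℚ) (FF l) (MvPolynomial.X i.succ)

/-- `W(a) = (1/2)∑ B_{ij} a_i a_j − ∑ d_i a_i`  (the double sum is even, so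
integer division by 2 gives the exact value). -/
def W9 {l : ℕ} (B : Matrix (Fin l) (Fin l) ℤ) (d : Fin l → ℕ) (a : Fin l → ℕ) : ℤ :=
  (∑ i, ∑ j, B i j * a i * a j) / 2 - ∑ i, (d i : ℤ) * a i

/-- `(Q;Q)_n = ∏_{k=1}^n (1 − Q^k)` -/
def pochQ {F : Type} [Field F] (Q : F) (n : ℕ) : F :=
  ∏ k ∈ Finset.range n, (1 - Q ^ (k + 1))

/-- `J` is the family of rational functions satisfying `J 0 = 1` and the
fermionic recursion with variables `q`, `z`. -/
def IsFerm {l : ℕ} (B : Matrix (Fin l) (Fin l) ℤ) (d : Fin l → ℕ)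
    {F : Type} [Field F] (q : F) (z : Fin l → F) (J : (Fin l → ℕ) → F) : Prop :=
  J 0 = 1 ∧ ∀ m : Fin l → ℕ, J m = ∑ a ∈ Finset.Iic m,
    (∏ i, z i ^ a i) * q ^ (W9 B d a) *
      (∏ i, pochQ (q ^ d i) (m i - a i))⁻¹ * J a

/-!
Euler's identity `∑_{k+j=n} (-1)^k Q^(k choose 2) / ((Q;Q)_k (Q;Q)_j) = δ_{n,0}` inverts the
fermionic recursion into `z^m q^W(m) J_m = ∑_{c ≤ m} E(m - c) J_c`, where
`E(u) = ∏_i (-1)^(u_i) q_i^(u_i choose 2) / (q_i;q_i)_(u_i)`. Since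
`σ((Q;Q)_n)⁻¹ = Q^n (-1)^n Q^(n choose 2) / (Q;Q)_n`, applying `σ` to the recursion shows that
`K_m = (q^(∑ d_i m_i) z^m q^W(m))⁻¹ σ(J_m)` satisfies the same inverted recursion, with `K_0 = 1`.
As `z^m q^W(m) ≠ 1` for `m ≠ 0`, that recursion determines its solution from its value at `0`, so
`K = J`; this is the claim because `∑ d_i m_i + W(m) = (1/2) ∑ B_ij m_i m_j`.
-/

open Finset

section Euler

variable {F : Type} [Field F] {Q : F}

lemma one_sub_pow_ne_zero_of_not_isOfFinOrder (hQ : ¬IsOfFinOrder Q) {n : ℕ} (hn : n ≠ 0) :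
    1 - Q ^ n ≠ 0 :=
  sub_ne_zero.2 fun h => hQ <| isOfFinOrder_iff_pow_eq_one.2 ⟨n, Nat.pos_of_ne_zero hn, h.symm⟩

lemma pochQ_succ (Q : F) (n : ℕ) : pochQ Q (n + 1) = pochQ Q n * (1 - Q ^ (n + 1)) :=
  prod_range_succ _ _

lemma one_sub_pow_mul_inv_pochQ_succ (hQ : ¬IsOfFinOrder Q) (n : ℕ) :
    (1 - Q ^ (n + 1)) * (pochQ Q (n + 1))⁻¹ = (pochQ Q n)⁻¹ := by
  have := one_sub_pow_ne_zero_of_not_isOfFinOrder hQ n.succ_ne_zero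
  rw [pochQ_succ, mul_inv, mul_left_comm, mul_inv_cancel₀ this, mul_one]

/-- The coefficient of `x^n` in Euler's expansion of `(x;Q)_∞`. -/
def eulerCoeff (Q : F) (n : ℕ) : F := (-1) ^ n * Q ^ n.choose 2 * (pochQ Q n)⁻¹

lemma eulerCoeff_zero (Q : F) : eulerCoeff Q 0 = 1 := by simp [eulerCoeff, pochQ]

lemma one_sub_pow_mul_eulerCoeff_succ (hQ : ¬IsOfFinOrder Q) (n : ℕ) :
    (1 - Q ^ (n + 1)) * eulerCoeff Q (n + 1) = -Q ^ n * eulerCoeff Q n := by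
  rw [eulerCoeff, eulerCoeff, Nat.choose_succ_succ', Nat.choose_one_right, pow_add,
    ← one_sub_pow_mul_inv_pochQ_succ hQ n, pow_succ]
  ring

lemma sum_antidiagonal_eulerCoeff_mul_inv_pochQ (hQ : ¬IsOfFinOrder Q) (n : ℕ) :
    ∑ p ∈ antidiagonal n, eulerCoeff Q p.1 * (pochQ Q p.2)⁻¹ = if n = 0 then 1 else 0 := by
  set e : ℕ → F := fun n => ∑ p ∈ antidiagonal n, eulerCoeff Q p.1 * (pochQ Q p.2)⁻¹
  -- split `1 - Q^(k+j) = (1 - Q^j) + Q^j (1 - Q^k)` and shift `j` resp. `k` down by one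
  have step (n : ℕ) : (1 - Q ^ (n + 1)) * e (n + 1) = (1 - Q ^ n) * e n := by
    calc (1 - Q ^ (n + 1)) * e (n + 1)
        = ∑ p ∈ antidiagonal (n + 1), eulerCoeff Q p.1 * ((1 - Q ^ p.2) * (pochQ Q p.2)⁻¹)
          + ∑ p ∈ antidiagonal (n + 1),
              Q ^ p.2 * ((1 - Q ^ p.1) * eulerCoeff Q p.1) * (pochQ Q p.2)⁻¹ := by
          rw [← sum_add_distrib, mul_sum]
          refine sum_congr rfl fun p hp => ?_
          rw [← mem_antidiagonal.1 hp, pow_add]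
          ring
      _ = e n + ∑ p ∈ antidiagonal n, -Q ^ n * (eulerCoeff Q p.1 * (pochQ Q p.2)⁻¹) := by
          rw [Nat.sum_antidiagonal_succ', Nat.sum_antidiagonal_succ]
          simp only [pow_zero, sub_self, zero_mul, mul_zero, zero_add,
            one_sub_pow_mul_inv_pochQ_succ hQ, one_sub_pow_mul_eulerCoeff_succ hQ]
          congr 1
          refine sum_congr rfl fun p hp => ?_
          rw [← mem_antidiagonal.1 hp, pow_add]
          ring
      _ = (1 - Q ^ n) * e n := by rw [← mul_sum]; ring
  change e n = _
  induction n with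
  | zero => simp [e, eulerCoeff_zero, pochQ]
  | succ n ih =>
    have h0 : (1 - Q ^ n) * (if n = 0 then 1 else 0) = 0 := by split_ifs with hn <;> simp [hn]
    rw [if_neg n.succ_ne_zero]
    have h := step n
    rw [ih, h0] at h
    exact (mul_eq_zero.1 h).resolve_left (one_sub_pow_ne_zero_of_not_isOfFinOrder hQ n.succ_ne_zero)

lemma sum_Icc_eulerCoeff_mul_inv_pochQ (hQ : ¬IsOfFinOrder Q) {a M : ℕ} (h : a ≤ M) :
    ∑ x ∈ Icc a M, eulerCoeff Q (M - x) * (pochQ Q (x - a))⁻¹ = if a = M then 1 else 0 := by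
  calc ∑ x ∈ Icc a M, eulerCoeff Q (M - x) * (pochQ Q (x - a))⁻¹
      = ∑ k ∈ range (M - a + 1), eulerCoeff Q (M - a - k) * (pochQ Q k)⁻¹ := by
        rw [← Ico_add_one_right_eq_Icc, sum_Ico_eq_sum_range, Nat.sub_add_comm h]
        refine sum_congr rfl fun k _ => ?_
        rw [Nat.add_sub_cancel_left, Nat.sub_sub]
    _ = ∑ k ∈ range (M - a + 1), eulerCoeff Q k * (pochQ Q (M - a - k))⁻¹ := by
        rw [← sum_range_reflect]
        refine sum_congr rfl fun k hk => ?_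
        have hk := mem_range.1 hk
        rw [Nat.add_sub_cancel, Nat.sub_sub_self (by omega)]
    _ = ∑ p ∈ antidiagonal (M - a), eulerCoeff Q p.1 * (pochQ Q p.2)⁻¹ :=
        (Nat.sum_antidiagonal_eq_sum_range_succ (fun i j => eulerCoeff Q i * (pochQ Q j)⁻¹) _).symm
    _ = if a = M then 1 else 0 := by
        rw [sum_antidiagonal_eulerCoeff_mul_inv_pochQ hQ]
        exact if_congr (by omega) rfl rfl

lemma pochQ_inv (hQ : Q ≠ 0) (n : ℕ) :
    pochQ Q⁻¹ n = (-1) ^ n * (Q ^ (n + 1).choose 2)⁻¹ * pochQ Q n := by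
  induction n with
  | zero => simp [pochQ]
  | succ n ih =>
    have h : 1 - Q⁻¹ ^ (n + 1) = -(Q ^ (n + 1))⁻¹ * (1 - Q ^ (n + 1)) := by
      rw [inv_pow]
      field_simp
      ring
    rw [pochQ_succ, ih, h, pochQ_succ, Nat.choose_succ_succ' (n + 1), Nat.choose_one_right, pow_add]
    ring

lemma inv_pochQ_inv (hQ : Q ≠ 0) (n : ℕ) : (pochQ Q⁻¹ n)⁻¹ = Q ^ n * eulerCoeff Q n := by
  rw [pochQ_inv hQ, eulerCoeff, Nat.choose_succ_succ' n 1, Nat.choose_one_right, pow_add,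
    mul_inv, mul_inv, inv_inv, ← inv_pow, inv_neg_one]
  ring

lemma sum_Icc_prod_eulerCoeff_mul_inv_pochQ {ι : Type*} [Fintype ι] [DecidableEq ι]
    {Q : ι → F} (hQ : ∀ i, ¬IsOfFinOrder (Q i)) {a m : ι → ℕ} (h : a ≤ m) :
    ∑ c ∈ Icc a m, ∏ i, eulerCoeff (Q i) (m i - c i) * (pochQ (Q i) (c i - a i))⁻¹
      = if a = m then 1 else 0 := by
  rw [Pi.Icc_eq, ← prod_univ_sum (fun i => Icc (a i) (m i))
    (fun i x => eulerCoeff (Q i) (m i - x) * (pochQ (Q i) (x - a i))⁻¹),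
    prod_congr rfl fun i _ => sum_Icc_eulerCoeff_mul_inv_pochQ (hQ i) (h i),
    Fintype.prod_boole]
  exact if_congr funext_iff.symm rfl rfl

lemma map_pochQ {K G : Type} [Field K] [FunLike G F K] [RingHomClass G F K] (f : G) (Q : F)
    (n : ℕ) : f (pochQ Q n) = pochQ (f Q) n := by
  simp [pochQ, map_prod]

end Euler

theorem eq_of_forall_mul_eq_sum_Iic {α R : Type*} [PartialOrder α] [OrderBot α]
    [LocallyFiniteOrderBot α] [WellFoundedLT α] [CommRing R] [IsDomain R]
    {T : α → R} {E : α → α → R} (hE : ∀ m, E m m = 1) (hT : ∀ m ≠ ⊥, T m ≠ 1) {X Y : α → R}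
    (hX : ∀ m, T m * X m = ∑ a ∈ Iic m, E m a * X a)
    (hY : ∀ m, T m * Y m = ∑ a ∈ Iic m, E m a * Y a) (h0 : X ⊥ = Y ⊥) : X = Y := by
  have below {Z : α → R} (hZ : ∀ m, T m * Z m = ∑ a ∈ Iic m, E m a * Z a) (m : α) :
      (T m - 1) * Z m = ∑ a ∈ Iio m, E m a * Z a := by
    rw [sub_mul, hZ, Iic_eq_cons_Iio, sum_cons, hE]
    ring
  funext m
  induction m using WellFoundedLT.induction with
  | _ m ih =>
    rcases eq_or_ne m ⊥ with rfl | hm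
    · exact h0
    refine mul_left_cancel₀ (sub_ne_zero.2 (hT m hm)) ?_
    rw [below hX, below hY]
    exact sum_congr rfl fun a ha => by rw [ih a (mem_Iio.1 ha)]

section Ferm

variable {l : ℕ} {B : Matrix (Fin l) (Fin l) ℤ} {d : Fin l → ℕ} {F : Type} [Field F] {q : F}
  {z : Fin l → F} {J : (Fin l → ℕ) → F}

theorem IsFerm.sum_Iic_prod_eulerCoeff_mul (hd : ∀ i, ¬IsOfFinOrder (q ^ d i))
    (hJ : IsFerm B d q z J) (m : Fin l → ℕ) :
    ∑ c ∈ Iic m, (∏ i, eulerCoeff (q ^ d i) (m i - c i)) * J c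
      = (∏ i, z i ^ m i) * q ^ W9 B d m * J m := by
  calc ∑ c ∈ Iic m, (∏ i, eulerCoeff (q ^ d i) (m i - c i)) * J c
      = ∑ c ∈ Iic m, ∑ a ∈ Iic c, (∏ i, eulerCoeff (q ^ d i) (m i - c i)) *
          ((∏ i, z i ^ a i) * q ^ W9 B d a * (∏ i, pochQ (q ^ d i) (c i - a i))⁻¹ * J a) :=
        sum_congr rfl fun c _ => by rw [hJ.2 c, mul_sum]
    _ = ∑ a ∈ Iic m, ∑ c ∈ Icc a m, (∏ i, eulerCoeff (q ^ d i) (m i - c i)) *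
          ((∏ i, z i ^ a i) * q ^ W9 B d a * (∏ i, pochQ (q ^ d i) (c i - a i))⁻¹ * J a) :=
        sum_comm' fun c a => by
          simp only [mem_Iic, mem_Icc]
          exact ⟨fun h => ⟨⟨h.2, h.1⟩, h.2.trans h.1⟩, fun h => ⟨h.1.2, h.1.1⟩⟩
    _ = ∑ a ∈ Iic m, (∏ i, z i ^ a i) * q ^ W9 B d a * J a * (if a = m then 1 else 0) :=
        sum_congr rfl fun a ha => by
          rw [← sum_Icc_prod_eulerCoeff_mul_inv_pochQ hd (mem_Iic.1 ha), mul_sum]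
          refine sum_congr rfl fun c _ => ?_
          rw [prod_mul_distrib, prod_inv_distrib]
          ring
    _ = (∏ i, z i ^ m i) * q ^ W9 B d m * J m := by
        simp only [mul_ite, mul_one, mul_zero, sum_ite_eq', mem_Iic, le_refl, if_true]

lemma map_inv_prod_pochQ (σ : F ≃+* F) (hq0 : q ≠ 0) (hσq : σ q = q⁻¹) (u : Fin l → ℕ) :
    σ (∏ i, pochQ (q ^ d i) (u i))⁻¹
      = q ^ (∑ i, d i * u i) * ∏ i, eulerCoeff (q ^ d i) (u i) := by
  simp only [map_inv₀, map_prod, map_pochQ, map_pow, hσq, inv_pow, ← prod_inv_distrib,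
    inv_pochQ_inv (pow_ne_zero _ hq0), prod_mul_distrib, ← pow_mul, prod_pow_eq_pow_sum]

lemma map_prod_pow_mul_zpow (σ : F ≃+* F) (hσq : σ q = q⁻¹) (hσz : ∀ i, σ (z i) = (z i)⁻¹)
    (a : Fin l → ℕ) (w : ℤ) : σ ((∏ i, z i ^ a i) * q ^ w) = ((∏ i, z i ^ a i) * q ^ w)⁻¹ := by
  simp only [map_mul, map_prod, map_pow, map_zpow₀, hσq, hσz, inv_pow, inv_zpow, prod_inv_distrib,
    mul_inv]

theorem IsFerm.map_eq_sum (σ : F ≃+* F) (hq0 : q ≠ 0) (hσq : σ q = q⁻¹)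
    (hσz : ∀ i, σ (z i) = (z i)⁻¹) (hJ : IsFerm B d q z J) (m : Fin l → ℕ) :
    σ (J m) = ∑ a ∈ Iic m, q ^ (∑ i, d i * (m i - a i)) *
      (∏ i, eulerCoeff (q ^ d i) (m i - a i)) * ((∏ i, z i ^ a i) * q ^ W9 B d a)⁻¹ * σ (J a) := by
  conv_lhs => rw [hJ.2 m]
  rw [map_sum]
  refine sum_congr rfl fun a _ => ?_
  rw [map_mul, map_mul, map_prod_pow_mul_zpow σ hσq hσz,
    map_inv_prod_pochQ σ hq0 hσq (fun i => m i - a i)]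
  ring

lemma pow_sum_mul_zpow_W9 (hq0 : q ≠ 0) (m : Fin l → ℕ) :
    q ^ (∑ i, d i * m i) * q ^ W9 B d m = q ^ ((∑ i, ∑ j, B i j * m i * m j) / 2) := by
  rw [W9, ← zpow_natCast, ← zpow_add₀ hq0]
  push_cast
  ring_nf

theorem IsFerm.map_eq (σ : F ≃+* F) (hq0 : q ≠ 0) (hz0 : ∀ i, z i ≠ 0)
    (hd : ∀ i, ¬IsOfFinOrder (q ^ d i))
    (hT : ∀ m ≠ 0, (∏ i, z i ^ m i) * q ^ W9 B d m ≠ 1)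
    (hσq : σ q = q⁻¹) (hσz : ∀ i, σ (z i) = (z i)⁻¹) (hJ : IsFerm B d q z J) (m : Fin l → ℕ) :
    σ (J m) = q ^ ((∑ i, ∑ j, B i j * m i * m j) / 2) * (∏ i, z i ^ m i) * J m := by
  set T : (Fin l → ℕ) → F := fun a => (∏ i, z i ^ a i) * q ^ W9 B d a
  set D : (Fin l → ℕ) → F := fun a => q ^ (∑ i, d i * a i)
  have hZ (a : Fin l → ℕ) : ∏ i, z i ^ a i ≠ 0 :=
    prod_ne_zero_iff.2 fun i _ => pow_ne_zero _ (hz0 i)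
  have hDT (a : Fin l → ℕ) : D a * T a ≠ 0 :=
    mul_ne_zero (pow_ne_zero _ hq0) (mul_ne_zero (hZ a) (zpow_ne_zero _ hq0))
  have hD (a m : Fin l → ℕ) (h : a ≤ m) : q ^ (∑ i, d i * (m i - a i)) * D a = D m := by
    simp only [D, ← pow_add, ← sum_add_distrib, ← mul_add, Nat.sub_add_cancel (h _)]
  -- `σ J` rescaled by `D T` satisfies the same inverted recursion as `J`
  have hK : (fun a => (D a * T a)⁻¹ * σ (J a)) = J := by
    refine eq_of_forall_mul_eq_sum_Iic (T := T)
      (E := fun m a => ∏ i, eulerCoeff (q ^ d i) (m i - a i))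
      (fun m => by simp [eulerCoeff_zero]) (fun m hm => hT m hm) (fun m => ?_)
      (fun m => (hJ.sum_Iic_prod_eulerCoeff_mul hd m).symm) ?_
    · rw [hJ.map_eq_sum σ hq0 hσq hσz m, mul_sum, mul_sum]
      refine sum_congr rfl fun a ha => ?_
      rw [← hD a m (mem_Iic.1 ha)]
      have := hZ m
      have := hZ a
      have : D a ≠ 0 := pow_ne_zero _ hq0
      have : q ^ (∑ i, d i * (m i - a i)) ≠ 0 := pow_ne_zero _ hq0
      simp only [T]
      field_simp
    · change (D 0 * T 0)⁻¹ * σ (J 0) = J 0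
      simp [D, T, W9, hJ.1]
  have hKm := congrFun hK m
  rw [inv_mul_eq_iff_eq_mul₀ (hDT m)] at hKm
  rw [hKm, ← pow_sum_mul_zpow_W9 hq0 m]
  ring

end Ferm

section FF

variable {l : ℕ}

lemma qv_pow_mul_prod_zv_pow (a : ℕ) (m : Fin l → ℕ) :
    qv l ^ a * ∏ i, zv l i ^ m i = algebraMap (MvPolynomial (Fin (l + 1)) ℚ) (FF l)
      (MvPolynomial.monomial (Finsupp.equivFunOnFinite.symm (Fin.cons a m)) 1) := by
  rw [MvPolynomial.monomial_eq, map_one, one_mul, Finsupp.prod_fintype _ _ (fun _ => pow_zero _),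
    Fin.prod_univ_succ]
  simp [qv, zv, map_prod]

lemma qv_pow_mul_prod_zv_pow_injective {a b : ℕ} {m n : Fin l → ℕ}
    (h : qv l ^ a * ∏ i, zv l i ^ m i = qv l ^ b * ∏ i, zv l i ^ n i) : a = b ∧ m = n := by
  rw [qv_pow_mul_prod_zv_pow, qv_pow_mul_prod_zv_pow] at h
  exact Fin.cons_inj.1 <| Finsupp.equivFunOnFinite.symm.injective <|
    (MvPolynomial.monomial_left_inj one_ne_zero).1 (IsFractionRing.injective _ _ h)

lemma qv_ne_zero : qv l ≠ 0 :=
  (map_ne_zero_iff _ (IsFractionRing.injective _ _)).2 (MvPolynomial.X_ne_zero _)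

lemma zv_ne_zero (i : Fin l) : zv l i ≠ 0 :=
  (map_ne_zero_iff _ (IsFractionRing.injective _ _)).2 (MvPolynomial.X_ne_zero _)

lemma not_isOfFinOrder_qv_pow {n : ℕ} (hn : n ≠ 0) : ¬IsOfFinOrder (qv l ^ n) := by
  rw [isOfFinOrder_pow, not_or]
  refine ⟨fun h => ?_, hn⟩
  obtain ⟨k, hk, hk1⟩ := isOfFinOrder_iff_pow_eq_one.1 h
  have := (qv_pow_mul_prod_zv_pow_injective (a := k) (b := 0) (m := 0) (n := 0) (by simpa)).1
  omega

lemma prod_zv_pow_mul_qv_zpow_ne_one {m : Fin l → ℕ} (hm : m ≠ 0) (w : ℤ) :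
    (∏ i, zv l i ^ m i) * qv l ^ w ≠ 1 := by
  intro h
  obtain ⟨k, rfl | rfl⟩ := Int.eq_nat_or_neg w
  · refine hm (qv_pow_mul_prod_zv_pow_injective (a := k) (b := 0) (n := 0) ?_).2
    simpa [mul_comm] using h
  · refine hm (qv_pow_mul_prod_zv_pow_injective (a := 0) (b := k) (n := 0) ?_).2
    rw [zpow_neg, zpow_natCast, mul_inv_eq_one₀ (pow_ne_zero _ qv_ne_zero)] at h
    simpa using h

end FF

theorem stmt_9_general (l : ℕ) (B : Matrix (Fin l) (Fin l) ℤ) (d : Fin l → ℕ)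
    (hdpos : ∀ i, 0 < d i)
    (J : (Fin l → ℕ) → FF l) (hJ : IsFerm B d (qv l) (zv l) J)
    (σ : FF l ≃+* FF l) (hq : σ (qv l) = (qv l)⁻¹)
    (hz : ∀ i, σ (zv l i) = (zv l i)⁻¹) :
    ∀ m : Fin l → ℕ,
      σ (J m) = qv l ^ ((∑ i, ∑ j, B i j * m i * m j) / 2) *
        (∏ i, zv l i ^ m i) * J m :=
  hJ.map_eq σ qv_ne_zero zv_ne_zero (fun i => not_isOfFinOrder_qv_pow (hdpos i).ne')
    (fun _ hm => prod_zv_pow_mul_qv_zpow_ne_one hm _) hq hz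

theorem stmt_9 (l : ℕ) (hl : 1 ≤ l) (B : Matrix (Fin l) (Fin l) ℤ) (d : Fin l → ℕ)
    (hsym : B.IsSymm) (hdpos : ∀ i, 0 < d i) (hdiag : ∀ i, B i i = 2 * d i)
    (hoff : ∀ i j, i ≠ j → B i j ≤ 0) (hdvd : ∀ i j, (d i : ℤ) ∣ B i j)
    (hposdef : ∀ x : Fin l → ℤ, x ≠ 0 → 0 < ∑ i, ∑ j, B i j * x i * x j)
    (J : (Fin l → ℕ) → FF l) (hJ : IsFerm B d (qv l) (zv l) J)
    (σ : FF l ≃+* FF l) (hq : σ (qv l) = (qv l)⁻¹)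
    (hz : ∀ i, σ (zv l i) = (zv l i)⁻¹) :
    ∀ m : Fin l → ℕ,
      σ (J m) = qv l ^ ((∑ i, ∑ j, B i j * m i * m j) / 2) *
        (∏ i, zv l i ^ m i) * J m :=
  stmt_9_general l B d hdpos J hJ σ hq hz
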